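/- arXiv:2410.09316 — 3 statements merged into one kernel-verified Lean document; each statement's English description precedes it below -/
import Mathlib

section
/- Let X_1,...,X_n be real numbers and let I ⊆ {1,...,n} with |I| = k ≥ 2 be a subset minimizing the sum of squared deviations S_XX(I) - (1/k)·S_X(I)² among all k-subsets (where S_X(I) = ∑_{i∈I} X_i and S_XX(I) = ∑_{i∈I} X_i²). Then there is no index o ∉ I such that X_{i1} ≤ X_o ≤ X_{i2} for some i1, i2 ∈ I; i.e., the optimal subset is contiguous in the sorted order of the values. -/
/-- an optimal k-subset minimizing the sum of squared deviations
contains no outside point between two of its members. -/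
theorem optimal_variance_subset_contiguous
    {n k : ℕ} (hk : 2 ≤ k) (X : Fin n → ℝ) (hinj : Function.Injective X)
    (I : Finset (Fin n)) (hI : I.card = k)
    (hmin : ∀ J : Finset (Fin n), J.card = k →
      (∑ i ∈ I, (X i) ^ 2) - (1 / (k : ℝ)) * (∑ i ∈ I, X i) ^ 2 ≤
      (∑ i ∈ J, (X i) ^ 2) - (1 / (k : ℝ)) * (∑ i ∈ J, X i) ^ 2) :
    ¬ ∃ o ∉ I, ∃ i1 ∈ I, ∃ i2 ∈ I, X i1 ≤ X o ∧ X o ≤ X i2 := by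
  rintro ⟨o, ho, i1, hi1, i2, hi2, h1, h2⟩
  have hkR : (0:ℝ) < (k:ℝ) := by positivity
  have ho1 : X i1 < X o := lt_of_le_of_ne h1 (fun h => ho (by rwa [hinj h] at hi1))
  have ho2 : X o < X i2 := lt_of_le_of_ne h2 (fun h => ho (by rwa [← hinj h] at hi2))
  set S : ℝ := ∑ i ∈ I, X i with hS
  obtain ⟨x, hxI, hlt⟩ : ∃ x ∈ I, ((k:ℝ) * X o - S)^2 < ((k:ℝ) * X x - S)^2 := by
    by_cases hcase : (k:ℝ) * X o ≤ S
    · refine ⟨i1, hi1, ?_⟩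
      nlinarith [mul_lt_mul_of_pos_left ho1 hkR]
    · refine ⟨i2, hi2, ?_⟩
      push_neg at hcase
      nlinarith [mul_lt_mul_of_pos_left ho2 hkR]
  have hoE : o ∉ I.erase x := fun h => ho (Finset.mem_of_mem_erase h)
  set J : Finset (Fin n) := insert o (I.erase x) with hJ
  have hJcard : J.card = k := by
    rw [hJ, Finset.card_insert_of_notMem hoE, Finset.card_erase_of_mem hxI, hI]
    omega
  have hSJ : ∑ j ∈ J, X j = S - X x + X o := by
    rw [hJ, Finset.sum_insert hoE, Finset.sum_erase_eq_sub hxI]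
    ring
  have hQJ : ∑ j ∈ J, (X j)^2 = (∑ i ∈ I, (X i)^2) - (X x)^2 + (X o)^2 := by
    rw [hJ, Finset.sum_insert hoE, Finset.sum_erase_eq_sub hxI]
    ring
  have hfin := hmin J hJcard
  rw [hSJ, hQJ] at hfin
  have hk0 : (k:ℝ) ≠ 0 := ne_of_gt hkR
  rw [div_mul_eq_mul_div, div_mul_eq_mul_div, sub_le_sub_iff] at hfin
  field_simp at hfin
  nlinarith [hfin, hlt, hkR, mul_pos hkR hkR, sq_nonneg (X o - X x)]
end

section
/- Let X_1,...,X_n be real numbers and let I be a k-subset minimizing the sum of squared deviations among all k-subsets. Then the lifted point sets {(X_i, X_i²) : i ∈ I} and {(X_o, X_o²) : o ∉ I} are linearly separable in ℝ², i.e., there exist w ∈ ℝ² and b ∈ ℝ with ⟨w, (X_i, X_i²)⟩ ≤ b for all i ∈ I and ⟨w, (X_o, X_o²)⟩ > b for all o ∉ I. -/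
/-- a k-subset minimizing the sum of squared deviations becomes
linearly separable from its complement after the parabolic lift x ↦ (x, x²). -/
theorem optimal_variance_subset_lift_separable
    {n k : ℕ} (X : Fin n → ℝ) (hinj : Function.Injective X)
    (I : Finset (Fin n)) (hI : I.card = k)
    (hmin : ∀ J : Finset (Fin n), J.card = k →
      (∑ i ∈ I, (X i) ^ 2) - (1 / (k : ℝ)) * (∑ i ∈ I, X i) ^ 2 ≤
      (∑ i ∈ J, (X i) ^ 2) - (1 / (k : ℝ)) * (∑ i ∈ J, X i) ^ 2) :
    ∃ (w : ℝ × ℝ) (b : ℝ),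
      (∀ i ∈ I, w.1 * X i + w.2 * (X i) ^ 2 ≤ b) ∧
      (∀ o ∉ I, w.1 * X o + w.2 * (X o) ^ 2 > b) := by
  rcases I.eq_empty_or_nonempty with hIe | hne
  · refine ⟨(0, 1), -1, ?_, ?_⟩
    · intro i hi; rw [hIe] at hi; simp at hi
    · intro o _; simp only; nlinarith [sq_nonneg (X o)]
  · by_cases hfull : ∀ o, o ∈ I
    · exact ⟨(0, 0), 0, fun i _ => by simp, fun o ho => absurd (hfull o) ho⟩
    · push_neg at hfull
      have hkpos : (0 : ℝ) < k := by
        have := hne.card_pos; rw [hI] at this; exact_mod_cast this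
      set S := ∑ i ∈ I, X i with hS
      set ψ : Fin n → ℝ := fun i => (-(2 * S / k)) * X i + 1 * (X i) ^ 2 with hψ
      have key : ∀ i ∈ I, ∀ o ∉ I, ψ i < ψ o := by
        intro i hi o ho
        have hio : X i ≠ X o := fun h => ho (hinj h ▸ hi)
        set J : Finset (Fin n) := insert o (I.erase i) with hJ
        have honi : o ∉ I.erase i := fun h => ho (Finset.mem_of_mem_erase h)
        have hk1 : 1 ≤ k := hI ▸ hne.card_pos
        have hJcard : J.card = k := by
          rw [hJ, Finset.card_insert_of_notMem honi, Finset.card_erase_of_mem hi, hI]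
          omega
        have hsum1 : ∑ x ∈ J, X x = S - X i + X o := by
          rw [hJ, Finset.sum_insert honi, Finset.sum_erase_eq_sub hi]; ring
        have hsum2 : ∑ x ∈ J, (X x) ^ 2 = (∑ x ∈ I, (X x) ^ 2) - (X i) ^ 2 + (X o) ^ 2 := by
          rw [hJ, Finset.sum_insert honi, Finset.sum_erase_eq_sub hi]; ring
        have hm := hmin J hJcard
        rw [hsum1, hsum2] at hm
        have hd0 : X o - X i ≠ 0 := sub_ne_zero.mpr (Ne.symm hio)
        have hd : (0:ℝ) < (X o - X i) ^ 2 := by positivity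
        have h1 : (1/(k:ℝ)) * ((S - X i + X o)^2 - S^2) ≤ (X o)^2 - (X i)^2 := by
          linarith [hm, (by ring : (1/(k:ℝ)) * ((S - X i + X o)^2 - S^2) =
            1/(k:ℝ) * (S - X i + X o)^2 - 1/(k:ℝ) * S^2)]
        have h1' : ((S - X i + X o)^2 - S^2) / (k:ℝ) ≤ (X o)^2 - (X i)^2 := by
          rw [div_eq_inv_mul, ← one_div]; exact h1
        have h2 : ((S - X i + X o)^2 - S^2) ≤ ((X o)^2 - (X i)^2) * (k:ℝ) :=
          (div_le_iff₀ hkpos).mp h1'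
        have h3 : 2*S*(X o - X i) + (X o - X i)^2 ≤ ((X o)^2 - (X i)^2) * (k:ℝ) := by
          linarith [h2, (by ring : (S - X i + X o)^2 - S^2 =
            2*S*(X o - X i) + (X o - X i)^2)]
        have hk0 : (k:ℝ) ≠ 0 := hkpos.ne'
        rw [hψ]
        simp only
        have e1 : (k:ℝ) * (-(2*S/(k:ℝ))*X i + 1*X i^2) = -(2*S*X i) + (k:ℝ)*X i^2 := by
          field_simp
        have e2 : (k:ℝ) * (-(2*S/(k:ℝ))*X o + 1*X o^2) = -(2*S*X o) + (k:ℝ)*X o^2 := by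
          field_simp
        have goalmul : (k:ℝ) * (-(2*S/(k:ℝ))*X i + 1*X i^2) <
            (k:ℝ) * (-(2*S/(k:ℝ))*X o + 1*X o^2) := by
          rw [e1, e2]; nlinarith [h3, hd]
        exact lt_of_mul_lt_mul_left goalmul hkpos.le
      obtain ⟨o0, ho0⟩ := hfull
      refine ⟨(-(2 * S / k), 1), I.sup' hne ψ, ?_, ?_⟩
      · intro i hi
        exact Finset.le_sup' ψ hi
      · intro o ho
        rw [gt_iff_lt, Finset.sup'_lt_iff]
        intro i hi
        exact key i hi o ho
end

section
/- Let X_1,...,X_n be distinct reals and k ≤ n. A k-subset I minimizes the sum of squared deviations among all k-subsets only if I consists of k consecutive elements in the sorted order of X. Consequently, the minimizer can be found by checking at most n−k+1 candidate windows. -/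
lemma swap_decrease (kk y M S Q : ℝ) (hkk : 1 ≤ kk) (hyM : y < M) (hS : S ≤ kk * y) :
    (Q - M^2 + y^2) - (1/kk) * (S - M + y)^2 < Q - (1/kk) * S^2 := by
  have hkk0 : (0:ℝ) < kk := by linarith
  rw [div_mul_eq_mul_div, div_mul_eq_mul_div, sub_div', sub_div', div_lt_div_iff₀ hkk0 hkk0] <;>
    try positivity
  nlinarith [mul_pos (sub_pos.2 hyM) (show (0:ℝ) < (kk+1)*(M-y) + 2*(kk*y - S) by nlinarith)]

lemma swap_decrease' (kk y m S Q : ℝ) (hkk : 1 ≤ kk) (hym : m < y) (hS : kk * y ≤ S) :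
    (Q - m^2 + y^2) - (1/kk) * (S - m + y)^2 < Q - (1/kk) * S^2 := by
  have h := swap_decrease kk (-y) (-m) (-S) Q hkk (by linarith) (by linarith)
  rw [neg_sq, neg_sq, show (-S - -m + -y) = -(S - m + y) by ring, neg_sq, neg_sq] at h
  exact h

/-- a k-subset minimizing the sum of squared deviations consists of
k consecutive elements in the sorted order of the (distinct) data. -/
theorem optimal_variance_subset_is_window
    {n k : ℕ} (hk : 0 < k) (hkn : k ≤ n) (X : Fin n → ℝ) (hinj : Function.Injective X)
    (I : Finset (Fin n)) (hI : I.card = k)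
    (hmin : ∀ J : Finset (Fin n), J.card = k →
      (∑ i ∈ I, (X i) ^ 2) - (1 / (k : ℝ)) * (∑ i ∈ I, X i) ^ 2 ≤
      (∑ i ∈ J, (X i) ^ 2) - (1 / (k : ℝ)) * (∑ i ∈ J, X i) ^ 2) :
    ∃ (π : Equiv.Perm (Fin n)), StrictMono (X ∘ π) ∧
      ∃ ℓ : Fin n, (ℓ : ℕ) + k ≤ n ∧
        I = (Finset.univ.filter (fun j : Fin n => ℓ ≤ j ∧ (j : ℕ) < (ℓ : ℕ) + k)).image π := by
  classical
  set s : Finset ℝ := Finset.univ.image X with hs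
  have hcard : s.card = n := by
    rw [hs, Finset.card_image_of_injective _ hinj, Finset.card_univ, Fintype.card_fin]
  have e1 : Fin n ≃o {x // x ∈ s} := s.orderIsoOfFin hcard
  have hfbij : Function.Bijective (fun i : Fin n => (⟨X i, by simp [hs]⟩ : {x // x ∈ s})) := by
    refine (Fintype.bijective_iff_injective_and_card _).2
      ⟨fun a b h => hinj (congrArg Subtype.val h), ?_⟩
    simp [Fintype.card_coe, hcard]
  set e2 := Equiv.ofBijective _ hfbij with he2
  set π : Equiv.Perm (Fin n) := e1.toEquiv.trans e2.symm with hπ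
  have hX : ∀ i, X (π i) = (e1 i : ℝ) := by
    intro i
    exact congrArg Subtype.val (e2.apply_symm_apply (e1 i))
  have hmono : StrictMono (X ∘ π) := by
    intro i j hij
    show X (π i) < X (π j)
    rw [hX, hX]
    exact Subtype.coe_lt_coe.2 (e1.strictMono hij)
  refine ⟨π, hmono, ?_⟩
  set J : Finset (Fin n) := I.image π.symm with hJ
  have hIJ : I = J.image π := by
    rw [hJ, Finset.image_image]
    ext j; simp
  have hJcard : J.card = k := by
    rw [hJ, Finset.card_image_of_injective _ π.symm.injective, hI]
  have hJne : J.Nonempty := Finset.card_pos.1 (hJcard ▸ hk)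
  set a := J.min' hJne with ha
  set c := J.max' hJne with hc
  have haJ : a ∈ J := J.min'_mem hJne
  have hcJ : c ∈ J := J.max'_mem hJne
  have hsub : J ⊆ Finset.Icc a c := fun j hj =>
    Finset.mem_Icc.2 ⟨J.min'_le j hj, J.le_max' j hj⟩
  have hck : (a:ℕ) + k ≤ (c:ℕ) + 1 := by
    have h := Finset.card_le_card hsub
    rw [hJcard, Fin.card_Icc] at h
    omega
  by_cases hcase : (c:ℕ) + 1 = (a:ℕ) + k
  · refine ⟨a, by have := c.isLt; omega, ?_⟩
    have hIcc : J = Finset.Icc a c :=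
      Finset.eq_of_subset_of_card_le hsub (by rw [hJcard, Fin.card_Icc]; omega)
    rw [hIJ]
    congr 1
    rw [hIcc]
    ext j
    simp only [Finset.mem_Icc, Finset.mem_filter, Finset.mem_univ, true_and, Fin.le_def,
      Fin.lt_def]
    omega
  · exfalso
    have hlt : J.card < (Finset.Icc a c).card := by rw [hJcard, Fin.card_Icc]; omega
    obtain ⟨b, hbIcc, hbJ⟩ := Finset.exists_of_ssubset
      (hsub.ssubset_of_ne (fun he => absurd (he ▸ hlt) (lt_irrefl _)))
    rw [Finset.mem_Icc] at hbIcc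
    have hab : a < b := lt_of_le_of_ne hbIcc.1 (fun h => hbJ (h ▸ haJ))
    have hbc : b < c := lt_of_le_of_ne hbIcc.2 (fun h => hbJ (h ▸ hcJ))
    have hπbI : π b ∉ I := fun h => hbJ (by simpa [hJ] using Finset.mem_image_of_mem π.symm h)
    have hπaI : π a ∈ I := hIJ ▸ Finset.mem_image_of_mem π haJ
    have hπcI : π c ∈ I := hIJ ▸ Finset.mem_image_of_mem π hcJ
    have hk1 : (1:ℝ) ≤ (k:ℝ) := by exact_mod_cast hk
    -- choose which extreme to swap out
    rcases le_or_gt (∑ i ∈ I, X i) ((k:ℝ) * X (π b)) with hy | hy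
    · -- replace the max (π c) by π b
      set J' : Finset (Fin n) := insert (π b) (I.erase (π c)) with hJ'
      have hnotmem : π b ∉ I.erase (π c) := fun h => hπbI (Finset.mem_of_mem_erase h)
      have hJ'card : J'.card = k := by
        rw [hJ', Finset.card_insert_of_notMem hnotmem, Finset.card_erase_of_mem hπcI, hI]
        omega
      have hsum : ∑ i ∈ J', X i = (∑ i ∈ I, X i) - X (π c) + X (π b) := by
        rw [hJ', Finset.sum_insert hnotmem, Finset.sum_erase_eq_sub hπcI]; ring
      have hsumsq : ∑ i ∈ J', (X i)^2 = (∑ i ∈ I, (X i)^2) - (X (π c))^2 + (X (π b))^2 := by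
        rw [hJ', Finset.sum_insert hnotmem, Finset.sum_erase_eq_sub hπcI]; ring
      have hmin' := hmin J' hJ'card
      rw [hsum, hsumsq] at hmin'
      have hdec := swap_decrease (k:ℝ) (X (π b)) (X (π c)) (∑ i ∈ I, X i)
        (∑ i ∈ I, (X i)^2) hk1 (hmono hbc) hy
      linarith
    · -- replace the min (π a) by π b
      set J' : Finset (Fin n) := insert (π b) (I.erase (π a)) with hJ'
      have hnotmem : π b ∉ I.erase (π a) := fun h => hπbI (Finset.mem_of_mem_erase h)
      have hJ'card : J'.card = k := by
        rw [hJ', Finset.card_insert_of_notMem hnotmem, Finset.card_erase_of_mem hπaI, hI]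
        omega
      have hsum : ∑ i ∈ J', X i = (∑ i ∈ I, X i) - X (π a) + X (π b) := by
        rw [hJ', Finset.sum_insert hnotmem, Finset.sum_erase_eq_sub hπaI]; ring
      have hsumsq : ∑ i ∈ J', (X i)^2 = (∑ i ∈ I, (X i)^2) - (X (π a))^2 + (X (π b))^2 := by
        rw [hJ', Finset.sum_insert hnotmem, Finset.sum_erase_eq_sub hπaI]; ring
      have hmin' := hmin J' hJ'card
      rw [hsum, hsumsq] at hmin'
      have hdec := swap_decrease' (k:ℝ) (X (π b)) (X (π a)) (∑ i ∈ I, X i)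
        (∑ i ∈ I, (X i)^2) hk1 (hmono hab) hy.le
      linarith
end
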